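/- In a metric space, if (K_n) is a decreasing sequence of nonempty compact sets, then for every s ≥ 0 and ε > 0 the spherical Hausdorff ε-premeasure of the intersection ⋂ₙ Kₙ equals the limit of the spherical Hausdorff ε-premeasures of the Kₙ. -/
import Mathlib


open Metric Set Filter

/-- The spherical Hausdorff `ε`-premeasure: infimum over countable covers of `E` by
open balls of radius at most `ε` (positive radii) of `∑ rₖ ^ s`. -/
noncomputable def sphPre {X : Type*} [PseudoMetricSpace X] (s ε : ℝ) (E : Set X) : ENNReal :=
  ⨅ (c : ℕ → X × ℝ) (_ : ∀ n, (c n).2 ∈ Set.Ioc 0 ε)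
    (_ : E ⊆ ⋃ n, Metric.ball (c n).1 (c n).2),
    ∑' n, ENNReal.ofReal ((c n).2 ^ s)

theorem sphPre_mono' {X : Type*} [PseudoMetricSpace X] (s ε : ℝ) {E F : Set X}
    (h : E ⊆ F) : sphPre s ε E ≤ sphPre s ε F := by
  refine le_iInf fun c => le_iInf fun hc => le_iInf fun hcov => ?_
  exact iInf_le_of_le c (iInf_le_of_le hc (iInf_le_of_le (h.trans hcov) le_rfl))

/-- In a metric space, if `(Kₙ)` is a decreasing sequence of nonempty compact sets,
then for every `s ≥ 0` and `ε > 0` the spherical Hausdorff `ε`-premeasure of `⋂ₙ Kₙ`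
is the limit of the `ε`-premeasures of the `Kₙ`. -/
theorem sphPre_iInter_of_compact_decreasing {X : Type*} [MetricSpace X]
    (K : ℕ → Set X) (hdec : ∀ n, K (n + 1) ⊆ K n)
    (hcpt : ∀ n, IsCompact (K n)) (hne : ∀ n, (K n).Nonempty)
    (s : ℝ) (hs : 0 ≤ s) (ε : ℝ) (hε : 0 < ε) :
    Tendsto (fun n => sphPre s ε (K n)) atTop (nhds (sphPre s ε (⋂ n, K n))) := by
  have hanti : Antitone fun n => sphPre s ε (K n) := by
    refine antitone_nat_of_succ_le fun n => sphPre_mono' s ε (hdec n)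
  have key : sphPre s ε (⋂ n, K n) = ⨅ n, sphPre s ε (K n) := by
    refine le_antisymm (le_iInf fun n => sphPre_mono' s ε (iInter_subset K n)) ?_
    refine le_iInf fun c => le_iInf fun hc => le_iInf fun hcov => ?_
    set U : Set X := ⋃ n, Metric.ball (c n).1 (c n).2 with hU
    have hUopen : IsOpen U := isOpen_iUnion fun n => isOpen_ball
    have hexists : ∃ n, K n ⊆ U := by
      by_contra h
      push_neg at h
      have hne' : ∀ n, (K n \ U).Nonempty := by
        intro n
        rcases not_subset.1 (h n) with ⟨x, hx, hxU⟩
        exact ⟨x, hx, hxU⟩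
      have := IsCompact.nonempty_iInter_of_sequence_nonempty_isCompact_isClosed
        (fun n => K n \ U) (fun n => diff_subset_diff_left (hdec n)) hne'
        ((hcpt 0).diff hUopen)
        (fun n => ((hcpt n).isClosed).sdiff hUopen)
      rcases this with ⟨x, hx⟩
      simp only [mem_iInter, mem_diff] at hx
      exact (hx 0).2 (hcov (mem_iInter.2 fun n => (hx n).1))
    rcases hexists with ⟨n, hn⟩
    exact iInf_le_of_le n
      (iInf_le_of_le c (iInf_le_of_le hc (iInf_le_of_le hn le_rfl)))
  rw [key]
  exact tendsto_atTop_iInf hanti
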